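/- Let λ be a strongly inaccessible cardinal and D a uniform ultrafilter on λ. If Odd has a winning strategy in the game ⅁_D, then D is not weakly reasonable. -/

import Mathlib

open Set Ordinal Cardinal

noncomputable section

namespace Sh830

/-- `D` is a (proper) ultrafilter on the set `Z` of ordinals. -/
def IsUltraOn (Z : Set Ordinal) (D : Set (Set Ordinal)) : Prop :=
  (∀ A ∈ D, A ⊆ Z) ∧ Z ∈ D ∧ ∅ ∉ D ∧
  (∀ A B : Set Ordinal, A ∈ D → A ⊆ B → B ⊆ Z → B ∈ D) ∧
  (∀ A B : Set Ordinal, A ∈ D → B ∈ D → A ∩ B ∈ D) ∧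
  (∀ A : Set Ordinal, A ⊆ Z → A ∈ D ∨ Z \ A ∈ D)

/-- `D` is an ultrafilter on `λ`, where `λ` is identified with the set of ordinals `< λ`. -/
def IsUltrafilterOn (l : Ordinal) (D : Set (Set Ordinal)) : Prop :=
  IsUltraOn (Iio l) D

/-- `D` is uniform: every member of `D` has cardinality `λ`. -/
def IsUniformOn (l : Ordinal) (D : Set (Set Ordinal)) : Prop :=
  ∀ A ∈ D, #A = #(Iio l)

/-- `C` is a club (closed and unbounded) subset of `λ`. -/
def IsClubIn (C : Set Ordinal) (l : Ordinal) : Prop :=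
  C ⊆ Iio l ∧
  (∀ δ, δ < l → δ ≠ 0 → sSup (C ∩ Iio δ) = δ → δ ∈ C) ∧
  (∀ α, α < l → ∃ β ∈ C, α < β)

/-- The quotient `D/f = {A ⊆ λ : f⁻¹(A) ∈ D}`. -/
def quotUF (l : Ordinal) (D : Set (Set Ordinal)) (f : Ordinal → Ordinal) :
    Set (Set Ordinal) :=
  {A | A ⊆ Iio l ∧ Iio l ∩ f ⁻¹' A ∈ D}

/-- The family `F_λ` of all non-decreasing functions `λ → λ` with unbounded range. -/
def Flam (l : Ordinal) : Set (Ordinal → Ordinal) :=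
  {f | (∀ α, α < l → f α < l) ∧ (∀ α β, α ≤ β → β < l → f α ≤ f β) ∧
    (∀ γ, γ < l → ∃ α, α < l ∧ γ ≤ f α)}

/-- `D` is weakly reasonable: for every `f ∈ F_λ` there is a club `C` of `λ` with
`∪ {[δ, δ + f δ) : δ ∈ C} ∉ D`. -/
def WeaklyReasonable (l : Ordinal) (D : Set (Set Ordinal)) : Prop :=
  ∀ f ∈ Flam l, ∃ C, IsClubIn C l ∧ (⋃ δ ∈ C, Ico δ (δ + f δ)) ∉ D

/-- The order type of a set of ordinals: the (unique) ordinal order-isomorphic to it. -/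
def setOtp (S : Set Ordinal) : Ordinal :=
  sInf {o : Ordinal | Nonempty (Iio o ≃o S)}

/-- `min(β/E)`: the least element of the `E`-equivalence class of `β`. -/
def minClass (E : Ordinal → Ordinal → Prop) (β : Ordinal) : Ordinal :=
  sInf {γ | E γ β}

/-- The function `f_E` associated with an equivalence relation `E`:
`f_E α = otp {β < α : β = min(β/E) < min(α/E)}`. -/
def fEquiv (E : Ordinal → Ordinal → Prop) (α : Ordinal) : Ordinal :=
  setOtp {β | β < α ∧ β = minClass E β ∧ minClass E β < minClass E α}

/-- The equivalence relation `E_C` associated with a club `C`: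
`α E_C β` iff `(∀ γ ∈ C)(α < γ ↔ β < γ)`. -/
def clubRel (C : Set Ordinal) (α β : Ordinal) : Prop :=
  ∀ γ ∈ C, (α < γ ↔ β < γ)

/-- The quotient `D/C = D/E_C = D/f_{E_C}`. -/
def quotClub (l : Ordinal) (D : Set (Set Ordinal)) (C : Set Ordinal) :
    Set (Set Ordinal) :=
  quotUF l D (fEquiv (clubRel C))

/-- A strategy for Odd in the game `⅁_D`: given `i < λ`, Even's moves `β_j = α_{2j}`
for `j ≤ i`, and Odd's previous moves `γ_j = α_{2j+1}` for `j < i`, it produces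
Odd's move `γ_i = α_{2i+1}`. -/
def OddStr : Type 1 :=
  (i : Ordinal) → ((j : Ordinal) → j ≤ i → Ordinal) → ((j : Ordinal) → j < i → Ordinal) → Ordinal

/-- A legal position of the game just before Odd's `i`-th move. -/
def IsPosition (l i : Ordinal) (β γ : Ordinal → Ordinal) : Prop :=
  i < l ∧ (∀ j, j ≤ i → β j < l) ∧ (∀ j, j < i → β j < γ j ∧ γ j < l) ∧
  (∀ j, j < i → γ j < β (j + 1)) ∧
  (∀ j, j ≤ i → Order.IsSuccLimit j → β j = sSup (γ '' Iio j))

/-- A complete legal play of the game of length `λ`: `β i` is `α_{2i}`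
(Even's move) and `γ i` is `α_{2i+1}` (Odd's move). -/
def IsPlay (l : Ordinal) (β γ : Ordinal → Ordinal) : Prop :=
  (∀ i, i < l → β i < l ∧ γ i < l) ∧ (∀ i, i < l → β i < γ i) ∧
  (∀ i, i + 1 < l → γ i < β (i + 1)) ∧
  (∀ i, i < l → Order.IsSuccLimit i → β i = sSup (γ '' Iio i))

/-- `st` is a legal strategy for Odd: at every legal position it produces a legal move,
i.e. an ordinal `α_{2i+1}` with `α_{2i} < α_{2i+1} < λ`. -/
def IsOddStrategy (l : Ordinal) (st : OddStr) : Prop :=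
  ∀ i β γ, IsPosition l i β γ →
    β i < st i (fun j _ => β j) (fun j _ => γ j) ∧
    st i (fun j _ => β j) (fun j _ => γ j) < l

/-- The play `(β, γ)` follows the strategy `st` of Odd. -/
def FollowsOdd (l : Ordinal) (st : OddStr) (β γ : Ordinal → Ordinal) : Prop :=
  ∀ i, i < l → γ i = st i (fun j _ => β j) (fun j _ => γ j)

/-- `st` is winning for Odd in `⅁_D`: in every play following it, Even loses, i.e.
`∪ {[α_{2i+1}, α_{2i+2}) : i < λ} ∉ D`. -/
def OddWinsWith (l : Ordinal) (D : Set (Set Ordinal)) (st : OddStr) : Prop :=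
  ∀ β γ, IsPlay l β γ → FollowsOdd l st β γ →
    (⋃ i ∈ Iio l, Ico (γ i) (β (i + 1))) ∉ D

/-- The next element of `C` above `δ`, i.e. `min (C \ (δ+1))`. -/
def nxt (C : Set Ordinal) (δ : Ordinal) : Ordinal := sInf (C ∩ Ioi δ)

/-- A condition of the forcing notion `Q¹_λ`; here `Z^p_δ = [δ, nxt C δ)` and
`d δ` is the ultrafilter `d^p_δ` on `Z^p_δ`. -/
structure Q1 (l : Ordinal) where
  γ : Ordinal
  C : Set Ordinal
  d : Ordinal → Set (Set Ordinal)
  γ_lt : γ < l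
  club : IsClubIn C l
  lim : ∀ δ ∈ C, Order.IsSuccLimit δ
  ultra : ∀ δ ∈ C, IsUltraOn (Ico δ (nxt C δ)) (d δ)

/-- The order of `Q¹_λ`. -/
def Q1le (l : Ordinal) (p q : Q1 l) : Prop :=
  p.γ ≤ q.γ ∧ p.C ∩ Iio p.γ ⊆ q.C ∧ q.C ⊆ p.C ∧
  ∀ δ ∈ q.C, ∀ A ∈ q.d δ,
    ∃ ζ ∈ p.C ∩ Ico δ (nxt q.C δ), A ∩ Ico ζ (nxt p.C ζ) ∈ p.d ζ

/-- A condition of the forcing notion `Q⁰_λ`; here `Z^p_δ = [δ, nxt C δ)` and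
`d δ` is the ultrafilter `d^p_δ` on `Z^p_δ`. -/
structure Q0 (l : Ordinal) where
  C : Set Ordinal
  d : Ordinal → Set (Set Ordinal)
  club : IsClubIn C l
  lim : ∀ δ ∈ C, Order.IsSuccLimit δ
  ultra : ∀ δ ∈ C, IsUltraOn (Ico δ (nxt C δ)) (d δ)

/-- The order relation of `Q⁰_λ`, on the underlying data. -/
def Q0leAux (Cp : Set Ordinal) (dp : Ordinal → Set (Set Ordinal))
    (Cq : Set Ordinal) (dq : Ordinal → Set (Set Ordinal)) : Prop :=
  Cq ⊆ Cp ∧ ∀ δ ∈ Cq, ∀ A ∈ dq δ,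
    ∃ ζ ∈ Cp ∩ Ico δ (nxt Cq δ), A ∩ Ico ζ (nxt Cp ζ) ∈ dp ζ

/-- The order `≤_{Q⁰_λ}`. -/
def Q0le (l : Ordinal) (p q : Q0 l) : Prop := Q0leAux p.C p.d q.C q.d

/-- The relation `≤*_{Q⁰_λ}`: for some `α < λ` the restrictions beyond `α` are
`≤_{Q⁰_λ}`-related. -/
def Q0leStar (l : Ordinal) (p q : Q0 l) : Prop :=
  ∃ α, α < l ∧ Q0leAux (p.C \ Iio α) p.d (q.C \ Iio α) q.d

/-- `fil(p) = {A ⊆ λ : (∃ ε < λ)(∀ δ ∈ C^p \ ε)(A ∩ Z^p_δ ∈ d^p_δ)}`. -/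
def fil (l : Ordinal) (p : Q0 l) : Set (Set Ordinal) :=
  {A | A ⊆ Iio l ∧ ∃ ε, ε < l ∧ ∀ δ ∈ p.C, ε ≤ δ → A ∩ Ico δ (nxt p.C δ) ∈ p.d δ}

/-- `fil(G*) = ∪ {fil(p) : p ∈ G*}`. -/
def filG (l : Ordinal) (G : Set (Q0 l)) : Set (Set Ordinal) := ⋃ p ∈ G, fil l p

/-- The relation `≤⁰`: `p ≤⁰ q` iff `fil(p) ⊆ fil(q)`. -/
def le0 (l : Ordinal) (p q : Q0 l) : Prop := fil l p ⊆ fil l q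

/-- `G` is `(<c)`-directed with respect to `le`: `G` is nonempty and every subset of `G`
of cardinality `< c` has an upper bound in `G`. -/
def DirLtOn (l : Ordinal) (c : Cardinal.{1}) (G : Set (Q0 l))
    (le : Q0 l → Q0 l → Prop) : Prop :=
  G.Nonempty ∧ ∀ S : Set (Q0 l), S ⊆ G → #S < c → ∃ r ∈ G, ∀ p ∈ S, le p r

/-- The sum `⊕^e {d_x : x ∈ X}` of ultrafilters `d x` on `Z x` along an ultrafilter `e`
on `X`. -/
def ufSum (X : Set Ordinal) (e : Set (Set Ordinal)) (Z : Ordinal → Set Ordinal)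
    (d : Ordinal → Set (Set Ordinal)) : Set (Set Ordinal) :=
  {A | A ⊆ (⋃ x ∈ X, Z x) ∧ {x | x ∈ X ∧ Z x ∩ A ∈ d x} ∈ e}

/-- The function `f_p` associated with `p ∈ Q⁰_λ`: `f_p α` is the member of `C^p` with
`otp (C^p ∩ f_p α) = ω·α + ω`. -/
def fP (l : Ordinal) (p : Q0 l) (α : Ordinal) : Ordinal :=
  sInf {β | β ∈ p.C ∧ setOtp (p.C ∩ Iio β) = Ordinal.omega0 * α + Ordinal.omega0}

/-- The space `^λλ` (functions below `l` matter). -/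
def funSp (l : Ordinal) : Set (Ordinal → Ordinal) := {f | ∀ α, α < l → f α < l}

/-- `F` is a dominating family in `^λλ`. -/
def IsDominating (l : Ordinal) (F : Set (Ordinal → Ordinal)) : Prop :=
  ∀ g ∈ funSp l, ∃ f ∈ F, ∃ α, α < l ∧ ∀ β, α < β → β < l → g β < f β

/-- The dominating number `𝔡_λ`. -/
def dLam (l : Ordinal) : Cardinal.{1} :=
  sInf {c : Cardinal | ∃ F : Set (Ordinal → Ordinal),
    F ⊆ funSp l ∧ IsDominating l F ∧ #F = c}

/-- `S` is non-stationary in `λ`. -/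
def NonStatIn (S : Set Ordinal) (l : Ordinal) : Prop :=
  ∃ C, IsClubIn C l ∧ S ∩ C = ∅

/-- `F` is a club-dominating family in `^λλ`. -/
def IsClubDominating (l : Ordinal) (F : Set (Ordinal → Ordinal)) : Prop :=
  ∀ g ∈ funSp l, ∃ f ∈ F, NonStatIn {β | β < l ∧ f β ≤ g β} l

/-- The club-dominating number `𝔡_{cl(λ)}`. -/
def dClubLam (l : Ordinal) : Cardinal.{1} :=
  sInf {c : Cardinal | ∃ F : Set (Ordinal → Ordinal),
    F ⊆ funSp l ∧ IsClubDominating l F ∧ #F = c}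

/-- `A` is a nowhere dense subset of the space `^λλ` (with basic open sets determined
by initial segments). -/
def IsNwd (l : Ordinal) (A : Set (Ordinal → Ordinal)) : Prop :=
  A ⊆ funSp l ∧
  ∀ s ∈ funSp l, ∀ α, α < l → ∃ t ∈ funSp l, ∃ α', α ≤ α' ∧ α' < l ∧
    (∀ β, β < α → t β = s β) ∧ ∀ f ∈ funSp l, (∀ β, β < α' → f β = t β) → f ∉ A

/-- `A` belongs to the ideal `M^λ_{λ,λ}`, the `(<λ)`-complete ideal generated by the
nowhere dense subsets of `^λλ`. -/
def InMIdeal (l : Ordinal) (A : Set (Ordinal → Ordinal)) : Prop :=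
  A ⊆ funSp l ∧ ∃ θ, θ < l ∧ ∃ B : Ordinal → Set (Ordinal → Ordinal),
    (∀ i, i < θ → IsNwd l (B i)) ∧ A ⊆ ⋃ i ∈ Iio θ, B i

/-- The covering number `cov(M^λ_{λ,λ})`. -/
def covM (l : Ordinal) : Cardinal.{1} :=
  sInf {c : Cardinal | ∃ S : Set (Set (Ordinal → Ordinal)),
    (∀ A ∈ S, InMIdeal l A) ∧ funSp l ⊆ ⋃₀ S ∧ #S = c}

/-! If Odd has a winning strategy `st`, let `f δ` exceed every answer of `st` at a position whose
index and moves are all `≤ δ`. As `λ` is strongly inaccessible there are fewer than `λ` such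
positions, so `f ∈ F_λ`, and weak reasonableness yields a club `C` with
`A = ⋃_{δ ∈ C} [δ, δ + f δ) ∉ D`. Let Even answer every move of Odd by the next point of `C`
(taking suprema at limits, which stay in `C`). Then each Odd move `γ_i` lies in
`[β_i, β_i + f β_i) ⊆ A`, so every `ξ ≥ β_0` outside `A` lies in some `[γ_i, β_{i+1})`: Even's set
contains `λ \ (A ∪ β_0) ∈ D`, and she wins against `st`. -/

lemma IsUltraOn.mem_of_forall_notMem {Z : Set Ordinal} {D : Set (Set Ordinal)}
    (hD : IsUltraOn Z D) {A B W : Set Ordinal} (hAZ : A ⊆ Z) (hA : A ∉ D) (hBZ : B ⊆ Z)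
    (hB : B ∉ D) (hWZ : W ⊆ Z) (h : ∀ ξ ∈ Z, ξ ∉ A → ξ ∉ B → ξ ∈ W) : W ∈ D := by
  obtain ⟨-, -, -, hup, hinter, hdich⟩ := hD
  have hAc := (hdich A hAZ).resolve_left hA
  have hBc := (hdich B hBZ).resolve_left hB
  exact hup _ _ (hinter _ _ hAc hBc) (by rintro ξ ⟨⟨hξ, hξA⟩, -, hξB⟩; exact h ξ hξ hξA hξB) hWZ

lemma IsUniformOn.Iio_notMem {κ : Cardinal} {D : Set (Set Ordinal)}
    (hU : IsUniformOn κ.ord D) {α : Ordinal} (hα : α < κ.ord) : Iio α ∉ D := fun hmem => by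
  have h := hU _ hmem
  rw [Cardinal.mk_Iio_ordinal, Cardinal.mk_Iio_ordinal, Cardinal.lift_inj, card_ord] at h
  exact (lt_ord.1 hα).ne h

lemma IsClubIn.nxt_mem {C : Set Ordinal} {l : Ordinal} (hC : IsClubIn C l) {x : Ordinal}
    (hx : x < l) : nxt C x ∈ C ∧ x < nxt C x := by
  obtain ⟨c, hcC, hxc⟩ := hC.2.2 x hx
  exact csInf_mem (⟨c, hcC, hxc⟩ : (C ∩ Ioi x).Nonempty)

lemma IsClubIn.mem_of_forall_lt_exists {C : Set Ordinal} {l δ : Ordinal} (hC : IsClubIn C l)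
    (hδ : δ < l) (hδ0 : δ ≠ 0) (hcof : ∀ x < δ, ∃ c ∈ C, x < c ∧ c < δ) : δ ∈ C := by
  refine hC.2.1 δ hδ hδ0 (le_antisymm (csSup_le' fun c hc => hc.2.le) (le_of_forall_lt ?_))
  intro x hx
  obtain ⟨c, hcC, hxc, hcδ⟩ := hcof x hx
  exact hxc.trans_le (le_csSup ⟨δ, fun c hc => hc.2.le⟩ ⟨hcC, hcδ⟩)

lemma sSup_image_Iio_lt_ord {κ : Cardinal} (hκ : κ.IsRegular) {g : Ordinal → Ordinal}
    {i : Ordinal} (hi : i < κ.ord) (hg : ∀ j < i, g j < κ.ord) : sSup (g '' Iio i) < κ.ord := by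
  refine sSup_lt_of_lt_cof ?_ (by rintro _ ⟨j, hj, rfl⟩; exact hg j hj)
  rw [← lift_cof, hκ.cof_ord]
  calc #(g '' Iio i) ≤ #(Iio i) := mk_image_le
    _ = Cardinal.lift i.card := Cardinal.mk_Iio_ordinal i
    _ < Cardinal.lift κ := Cardinal.lift_lt.2 (lt_ord.1 hi)

lemma power_self_lt_of_isStrongLimit {κ c : Cardinal} (hκ : κ.IsStrongLimit) (hc : c < κ) :
    c ^ c < κ :=
  calc c ^ c ≤ (2 ^ c) ^ c := power_le_power_right (cantor c).le
    _ = 2 ^ (c * c) := power_mul.symm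
    _ < κ := hκ.isStrongPrelimit (mul_lt_of_lt hκ.aleph0_le hc hc)

def boundedAnswers (st : OddStr) (δ : Ordinal) : Set Ordinal :=
  {o | ∃ i ≤ δ, ∃ b c : Ordinal → Ordinal, (∀ j ≤ i, b j ≤ δ) ∧ (∀ j < i, c j ≤ δ) ∧
    st i (fun j _ => b j) (fun j _ => c j) = o}

lemma boundedAnswers_mono (st : OddStr) : Monotone (boundedAnswers st) := by
  rintro δ δ' hδ _ ⟨i, hi, b, c, hb, hc, rfl⟩
  exact ⟨i, hi.trans hδ, b, c, fun j hj => (hb j hj).trans hδ, fun j hj => (hc j hj).trans hδ, rfl⟩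

lemma boundedAnswers_subset_range (st : OddStr) (δ : Ordinal) :
    boundedAnswers st δ ⊆ range fun p : Iic δ × (Iic δ → Iic δ) × (Iic δ → Iic δ) =>
      st p.1 (fun j hj => p.2.1 ⟨j, hj.trans p.1.2⟩)
        (fun j hj => p.2.2 ⟨j, hj.le.trans p.1.2⟩) := by
  rintro _ ⟨i, hi, b, c, hb, hc, rfl⟩
  refine ⟨(⟨i, hi⟩, fun j => ⟨min (b j) δ, mem_Iic.2 (min_le_right _ _)⟩,
    fun j => ⟨min (c j) δ, mem_Iic.2 (min_le_right _ _)⟩), ?_⟩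
  change st i _ _ = st i _ _
  congr 1 <;> funext j hj
  · exact min_eq_left (hb j hj)
  · exact min_eq_left (hc j hj)

lemma mk_boundedAnswers_lt {κ : Cardinal} (hκ : κ.IsStrongLimit) (st : OddStr) {δ : Ordinal}
    (hδ : δ < κ.ord) : #(boundedAnswers st δ) < Cardinal.lift κ := by
  set c := (Order.succ δ).card
  have hc : c < κ := lt_ord.1 ((isSuccLimit_ord hκ.aleph0_le).succ_lt hδ)
  have hIic : #(Iic δ) = Cardinal.lift c := by rw [← Order.Iio_succ, Cardinal.mk_Iio_ordinal]
  have hfun : #(Iic δ → Iic δ) = Cardinal.lift (c ^ c) := by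
    rw [mk_arrow, Cardinal.lift_id, hIic, Cardinal.lift_power]
  have hcc : c ^ c < κ := power_self_lt_of_isStrongLimit hκ hc
  calc #(boundedAnswers st δ) ≤ #(Iic δ × (Iic δ → Iic δ) × (Iic δ → Iic δ)) :=
        (mk_le_mk_of_subset (boundedAnswers_subset_range st δ)).trans mk_range_le
    _ = Cardinal.lift (c * (c ^ c * c ^ c)) := by
        simp only [mk_prod, Cardinal.lift_id, hIic, hfun, Cardinal.lift_mul]
    _ < Cardinal.lift κ := Cardinal.lift_lt.2 <| mul_lt_of_lt hκ.aleph0_le hc <|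
        mul_lt_of_lt hκ.aleph0_le hcc hcc

-- Answers `≥ l`, possible at illegal positions, are discarded so that the bound stays below `l`.
def answerBound (l : Ordinal) (st : OddStr) (δ : Ordinal) : Ordinal :=
  max δ (sSup ((· + 1) '' (boundedAnswers st δ ∩ Iio l)))

section answerBound

variable {l : Ordinal} {st : OddStr}

lemma bddAbove_succ_boundedAnswers (δ : Ordinal) :
    BddAbove ((· + 1) '' (boundedAnswers st δ ∩ Iio l)) :=
  ⟨l, by rintro _ ⟨o, ⟨-, ho⟩, rfl⟩; exact Order.add_one_le_of_lt ho⟩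

lemma lt_answerBound {δ o : Ordinal} (ho : o ∈ boundedAnswers st δ) (hol : o < l) :
    o < answerBound l st δ :=
  calc o < o + 1 := Order.lt_add_one_iff.2 le_rfl
    _ ≤ sSup ((· + 1) '' (boundedAnswers st δ ∩ Iio l)) :=
        le_csSup (bddAbove_succ_boundedAnswers δ) ⟨o, ⟨ho, hol⟩, rfl⟩
    _ ≤ answerBound l st δ := le_max_right _ _

lemma answerBound_mono : Monotone (answerBound l st) := fun _ _ hδ =>
  max_le_max hδ <| csSup_le_csSup' (bddAbove_succ_boundedAnswers _) <|
    image_mono (inter_subset_inter_left _ (boundedAnswers_mono st hδ))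

lemma answerBound_lt {κ : Cardinal} (hκ : κ.IsInaccessible) {δ : Ordinal} (hδ : δ < κ.ord) :
    answerBound κ.ord st δ < κ.ord := by
  refine max_lt hδ (sSup_add_one_lt_of_lt_cof ?_ fun o ho => ho.2)
  rw [← lift_cof, hκ.isRegular.cof_ord]
  exact (mk_le_mk_of_subset inter_subset_left).trans_lt
    (mk_boundedAnswers_lt hκ.isStrongLimit st hδ)

lemma answerBound_mem_Flam {κ : Cardinal} (hκ : κ.IsInaccessible) :
    answerBound κ.ord st ∈ Flam κ.ord :=
  ⟨fun _ hδ => answerBound_lt hκ hδ, fun _ _ h _ => answerBound_mono h,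
    fun γ hγ => ⟨γ, hγ, le_max_left _ _⟩⟩

end answerBound

open Classical in
def evenAlong (C : Set Ordinal) (g : Ordinal → Ordinal) (j : Ordinal) : Ordinal :=
  if j = 0 then nxt C 0 else if Order.IsSuccLimit j then sSup (g '' Iio j) else nxt C (g j.pred)

section evenAlong

variable (C : Set Ordinal) (g : Ordinal → Ordinal)

lemma evenAlong_zero : evenAlong C g 0 = nxt C 0 := if_pos rfl

lemma evenAlong_add_one (k : Ordinal) : evenAlong C g (k + 1) = nxt C (g k) := by
  rw [evenAlong, if_neg (add_pos_of_right zero_lt_one k).ne',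
    if_neg (Order.not_isSuccLimit_add_one k), pred_add_one]

lemma evenAlong_of_isSuccLimit {j : Ordinal} (hj : Order.IsSuccLimit j) :
    evenAlong C g j = sSup (g '' Iio j) := by
  rw [evenAlong, if_neg hj.ne_zero, if_pos hj]

variable {C g}

lemma evenAlong_congr {g' : Ordinal → Ordinal} {j : Ordinal} (h : ∀ k < j, g k = g' k) :
    evenAlong C g j = evenAlong C g' j := by
  cases j using limitRecOn with
  | zero => rw [evenAlong_zero, evenAlong_zero]
  | add_one k => rw [evenAlong_add_one, evenAlong_add_one, h k (Order.lt_add_one_iff.2 le_rfl)]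
  | limit j hj => rw [evenAlong_of_isSuccLimit _ _ hj, evenAlong_of_isSuccLimit _ _ hj,
      image_congr (s := Iio j) fun k hk => h k hk]

lemma evenAlong_mem_and_lt {κ : Cardinal} (hκ : κ.IsRegular) (hC : IsClubIn C κ.ord)
    {i : Ordinal} (hi : i < κ.ord)
    (IH : ∀ j < i, evenAlong C g j ∈ C ∧ (∀ k < j, g k < evenAlong C g j) ∧
      evenAlong C g j < g j ∧ g j < κ.ord) :
    evenAlong C g i ∈ C ∧ ∀ j < i, g j < evenAlong C g i := by
  cases i using limitRecOn with
  | zero =>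
    rw [evenAlong_zero]
    exact ⟨(hC.nxt_mem hi.pos).1, fun j hj => absurd hj not_lt_zero⟩
  | add_one k =>
    have hk := IH k (Order.lt_add_one_iff.2 le_rfl)
    have hnxt := hC.nxt_mem hk.2.2.2
    rw [evenAlong_add_one]
    refine ⟨hnxt.1, fun j hj => ?_⟩
    rcases (Order.lt_add_one_iff.1 hj).lt_or_eq with hjk | rfl
    · exact (hk.2.1 j hjk).trans (hk.2.2.1.trans hnxt.2)
    · exact hnxt.2
  | limit i hlim =>
    rw [evenAlong_of_isSuccLimit _ _ hlim]
    have hbdd : BddAbove (g '' Iio i) :=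
      ⟨κ.ord, by rintro _ ⟨j, hj, rfl⟩; exact (IH j hj).2.2.2.le⟩
    -- Between Odd's `j`-th move and the supremum lies Even's `(j+1)`-st move, a point of `C`.
    have hbetween : ∀ j < i,
        g j < evenAlong C g (j + 1) ∧ evenAlong C g (j + 1) < sSup (g '' Iio i) := fun j hj => by
      have hj1 := IH (j + 1) (hlim.add_one_lt hj)
      exact ⟨hj1.2.1 j (Order.lt_add_one_iff.2 le_rfl),
        hj1.2.2.1.trans_le (le_csSup hbdd ⟨j + 1, hlim.add_one_lt hj, rfl⟩)⟩
    refine ⟨hC.mem_of_forall_lt_exists (sSup_image_Iio_lt_ord hκ hi fun j hj => (IH j hj).2.2.2)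
      ?_ fun x hx => ?_, fun j hj => (hbetween j hj).1.trans (hbetween j hj).2⟩
    · exact ((IH 0 hlim.pos).2.2.1.trans_le (le_csSup hbdd ⟨0, hlim.pos, rfl⟩)).ne_bot
    · obtain ⟨_, ⟨j, hj, rfl⟩, hxj⟩ := (lt_csSup_iff' hbdd).1 hx
      exact ⟨_, (IH (j + 1) (hlim.add_one_lt hj)).1, hxj.trans (hbetween j hj).1,
        (hbetween j hj).2⟩

end evenAlong

-- Odd's moves when he follows `st` and Even answers with `evenAlong C`.
def oddMoves (st : OddStr) (C : Set Ordinal) : Ordinal → Ordinal :=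
  Ordinal.lt_wf.fix fun i IH =>
    st i (fun j _ => evenAlong C (fun k => if h : k < i then IH k h else 0) j)
      (fun j _ => if h : j < i then IH j h else 0)

def evenMoves (st : OddStr) (C : Set Ordinal) : Ordinal → Ordinal :=
  evenAlong C (oddMoves st C)

section moves

variable {st : OddStr} {C : Set Ordinal}

lemma oddMoves_eq (i : Ordinal) :
    oddMoves st C i = st i (fun j _ => evenMoves st C j) (fun j _ => oddMoves st C j) := by
  rw [oddMoves, WellFounded.fix_eq]
  congr 1 <;> funext j hj
  · exact evenAlong_congr fun k hk => dif_pos (hk.trans_le hj)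
  · exact dif_pos hj

lemma followsOdd_moves (l : Ordinal) : FollowsOdd l st (evenMoves st C) (oddMoves st C) :=
  fun i _ => oddMoves_eq i

variable {κ : Cardinal}

lemma moves_spec (hκ : κ.IsRegular) (hC : IsClubIn C κ.ord) (hst : IsOddStrategy κ.ord st)
    {i : Ordinal} (hi : i < κ.ord) :
    evenMoves st C i ∈ C ∧ (∀ j < i, oddMoves st C j < evenMoves st C i) ∧
      evenMoves st C i < oddMoves st C i ∧ oddMoves st C i < κ.ord := by
  induction i using WellFoundedLT.induction with
  | _ i IH =>
  have IH' := fun j (hj : j < i) => IH j hj (hj.trans hi)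
  obtain ⟨hiC, hlt⟩ := evenAlong_mem_and_lt hκ hC hi IH'
  have hpos : IsPosition κ.ord i (evenMoves st C) (oddMoves st C) := by
    refine ⟨hi, fun j hj => hC.1 ?_, fun j hj => (IH' j hj).2.2, fun j hj => ?_,
      fun j _ hj => evenAlong_of_isSuccLimit _ _ hj⟩
    · rcases hj.lt_or_eq with hj | rfl
      exacts [(IH' j hj).1, hiC]
    · rcases (Order.add_one_le_of_lt hj).lt_or_eq with hj1 | hj1
      · exact (IH' _ hj1).2.1 j (Order.lt_add_one_iff.2 le_rfl)
      · exact hj1 ▸ hlt j hj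
  rw [oddMoves_eq]
  exact ⟨hiC, hlt, hst i _ _ hpos⟩

lemma isPlay_moves (hκ : κ.IsRegular) (hC : IsClubIn C κ.ord) (hst : IsOddStrategy κ.ord st) :
    IsPlay κ.ord (evenMoves st C) (oddMoves st C) :=
  ⟨fun _ hi => ⟨hC.1 (moves_spec hκ hC hst hi).1, (moves_spec hκ hC hst hi).2.2.2⟩,
    fun _ hi => (moves_spec hκ hC hst hi).2.2.1,
    fun i hi => (moves_spec hκ hC hst hi).2.1 i (Order.lt_add_one_iff.2 le_rfl),
    fun _ _ hi => evenAlong_of_isSuccLimit _ _ hi⟩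

lemma le_evenMoves (hκ : κ.IsRegular) (hC : IsClubIn C κ.ord) (hst : IsOddStrategy κ.ord st)
    {i : Ordinal} (hi : i < κ.ord) : i ≤ evenMoves st C i := by
  induction i using WellFoundedLT.induction with
  | _ i IH =>
  refine le_of_forall_lt fun j hj => ?_
  have hj' := moves_spec hκ hC hst (hj.trans hi)
  exact (IH j hj (hj.trans hi)).trans_lt
    (hj'.2.2.1.trans ((moves_spec hκ hC hst hi).2.1 j hj))

lemma oddMoves_lt_answerBound (hκ : κ.IsRegular) (hC : IsClubIn C κ.ord)
    (hst : IsOddStrategy κ.ord st) {i : Ordinal} (hi : i < κ.ord) :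
    oddMoves st C i < answerBound κ.ord st (evenMoves st C i) := by
  have hspec := moves_spec hκ hC hst hi
  have hodd : ∀ j < i, oddMoves st C j ≤ evenMoves st C i := fun j hj => (hspec.2.1 j hj).le
  refine lt_answerBound ⟨i, le_evenMoves hκ hC hst hi, _, _, fun j hj => ?_, hodd,
    (oddMoves_eq i).symm⟩ hspec.2.2.2
  rcases hj.lt_or_eq with hj | rfl
  · exact ((moves_spec hκ hC hst (hj.trans hi)).2.2.1.trans (hspec.2.1 j hj)).le
  · exact le_rfl

end moves

lemma IsPlay.exists_mem_Ico {l : Ordinal} {β γ : Ordinal → Ordinal} (h : IsPlay l β γ)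
    {ξ : Ordinal} (hξ : β 0 ≤ ξ) (hex : ∃ i < l, ξ < γ i) :
    (∃ i < l, ξ ∈ Ico (β i) (γ i)) ∨ ∃ i < l, ξ ∈ Ico (γ i) (β (i + 1)) := by
  obtain ⟨i, ⟨hil, hξi⟩, hmin⟩ := Ordinal.lt_wf.has_min {i | i < l ∧ ξ < γ i} hex
  by_cases hβ : β i ≤ ξ
  · exact .inl ⟨i, hil, hβ, hξi⟩
  refine .inr ?_
  cases i using limitRecOn with
  | zero => exact absurd hξ hβ
  | add_one k =>
    have hk : k < k + 1 := Order.lt_add_one_iff.2 le_rfl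
    exact ⟨k, hk.trans hil, not_lt.1 fun hξk => hmin k ⟨hk.trans hil, hξk⟩ hk, not_le.1 hβ⟩
  | limit i hlim =>
    refine absurd ((h.2.2.2 i hil hlim).trans_le (csSup_le' ?_)) hβ
    rintro _ ⟨j, hj, rfl⟩
    exact not_lt.1 fun hξj => hmin j ⟨hj.trans hil, hξj⟩ hj

/-- Proposition 1.7(1): if `λ` is strongly inaccessible and Odd has a winning strategy
in `⅁_D`, then `D` is not weakly reasonable. -/
theorem stmt3 (κ : Cardinal) (hin : κ.IsInaccessible)
    (D : Set (Set Ordinal)) (hD : IsUltrafilterOn κ.ord D)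
    (hU : IsUniformOn κ.ord D)
    (hwin : ∃ st : OddStr, IsOddStrategy κ.ord st ∧ OddWinsWith κ.ord D st) :
    ¬ WeaklyReasonable κ.ord D := by
  obtain ⟨st, hst, hwin⟩ := hwin
  intro hWR
  obtain ⟨C, hC, hA⟩ := hWR _ (answerBound_mem_Flam (st := st) hin)
  have hreg := hin.isRegular
  have hlim : Order.IsSuccLimit κ.ord := isSuccLimit_ord hin.aleph0_lt.le
  have hplay := isPlay_moves hreg hC hst
  set β := evenMoves st C
  have hβ0 : β 0 < κ.ord := (hplay.1 0 hlim.pos).1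
  have hAsub : (⋃ δ ∈ C, Ico δ (δ + answerBound κ.ord st δ)) ⊆ Iio κ.ord :=
    iUnion₂_subset fun δ hδ _ hξ => hξ.2.trans <|
      isPrincipal_add_ord hin.aleph0_lt.le (hC.1 hδ) (answerBound_lt hin (hC.1 hδ))
  have hWsub : (⋃ i ∈ Iio κ.ord, Ico (oddMoves st C i) (β (i + 1))) ⊆ Iio κ.ord :=
    iUnion₂_subset fun i hi _ hξ => hξ.2.trans ((hplay.1 _ (hlim.add_one_lt hi)).1)
  refine hwin β _ hplay (followsOdd_moves _) <| hD.mem_of_forall_notMem hAsub hA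
    (Iio_subset_Iio hβ0.le) (hU.Iio_notMem hβ0) hWsub fun ξ hξ hξA hξ0 => ?_
  rcases hplay.exists_mem_Ico (not_lt.1 hξ0)
    ⟨ξ, hξ, (le_evenMoves hreg hC hst hξ).trans_lt (hplay.2.1 ξ hξ)⟩ with
    ⟨i, hi, hξi⟩ | ⟨i, hi, hξi⟩
  · refine (hξA (mem_biUnion (moves_spec hreg hC hst hi).1 ⟨hξi.1, ?_⟩)).elim
    exact hξi.2.trans ((oddMoves_lt_answerBound hreg hC hst hi).trans_le le_add_self)
  · exact mem_biUnion hi hξi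

end Sh830

end
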